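/- arXiv:1703.00443 — 3 statements merged into one kernel-verified Lean document; each statement's English description precedes it below -/
import Mathlib

section
/- Characterization of simplex projection via a threshold: for x ∈ ℝⁿ, the projection z* of x onto the simplex Δ = {z ≥ 0, Σzᵢ = 1} satisfies zᵢ* = max(xᵢ − τ, 0) for some τ ∈ ℝ with Σᵢ max(xᵢ − τ, 0) = 1. -/
/-!
A minimiser `z` of `‖w - x‖²` over a convex set satisfies the variational inequality
`⟪z - x, w - z⟫ ≥ 0`. On the simplex, testing it against the point that moves all the mass of a
coordinate `i` with `z i > 0` onto another coordinate `j` gives `x j - z j ≤ x i - z i`. Hence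
`x i - z i` is the same number `τ` for every `i` in the support of `z` and bounds `x j - z j` for
every other `j`, which is exactly `z = max (x - τ) 0`; summing gives the equation for `τ`.
-/

open Finset

theorem nonneg_of_forall_mul_add_sq_mul_nonneg {a b : ℝ}
    (h : ∀ t : ℝ, 0 < t → t ≤ 1 → 0 ≤ t * a + t ^ 2 * b) : 0 ≤ a := by
  by_contra! ha
  set t := min 1 (-a / (|b| + 1))
  have ht : 0 < t := lt_min one_pos (div_pos (neg_pos.2 ha) (by positivity))
  have htb : t * (|b| + 1) ≤ -a := (le_div_iff₀ (by positivity)).1 (min_le_right _ _)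
  have := h t ht (min_le_left _ _)
  nlinarith [le_abs_self b]

theorem sum_mul_sub_nonneg_of_isMinOn {ι : Type*} [Fintype ι] {S : Set (ι → ℝ)}
    (hS : Convex ℝ S) {x z : ι → ℝ} (hz : z ∈ S)
    (hmin : IsMinOn (fun w => ∑ i, (w i - x i) ^ 2) S z) {w : ι → ℝ} (hw : w ∈ S) :
    0 ≤ ∑ i, (z i - x i) * (w i - z i) := by
  refine nonneg_of_forall_mul_add_sq_mul_nonneg (b := (∑ i, (w i - z i) ^ 2) / 2)
    fun t ht0 ht1 => ?_
  have hexpand : ∑ i, ((z + t • (w - z)) i - x i) ^ 2 = ∑ i, (z i - x i) ^ 2 +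
      2 * (t * ∑ i, (z i - x i) * (w i - z i)) + t ^ 2 * ∑ i, (w i - z i) ^ 2 := by
    simp only [mul_sum, ← sum_add_distrib]
    refine sum_congr rfl fun i _ => ?_
    simp only [Pi.add_apply, Pi.smul_apply, Pi.sub_apply, smul_eq_mul]
    ring
  have := isMinOn_iff.1 hmin _ (hS.add_smul_sub_mem hz hw ⟨ht0.le, ht1⟩)
  rw [hexpand] at this
  linarith

theorem sub_le_sub_of_isMinOn_stdSimplex {ι : Type*} [Fintype ι] [DecidableEq ι]
    {x z : ι → ℝ} (hz : z ∈ stdSimplex ℝ ι)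
    (hmin : IsMinOn (fun w => ∑ i, (w i - x i) ^ 2) (stdSimplex ℝ ι) z) {i : ι}
    (hi : 0 < z i) (j : ι) : x j - z j ≤ x i - z i := by
  set w := z + z i • (Pi.single j 1 - Pi.single i 1)
  have hw : w ∈ stdSimplex ℝ ι := by
    refine ⟨fun k => ?_, ?_⟩
    · have := hz.1 k
      simp only [w, Pi.add_apply, Pi.smul_apply, Pi.sub_apply, Pi.single_apply, smul_eq_mul]
      split_ifs <;> subst_vars <;> nlinarith
    · simp [w, sum_add_distrib, hz.2, ← mul_sum, sum_sub_distrib]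
  have := sum_mul_sub_nonneg_of_isMinOn (convex_stdSimplex ℝ ι) hz hmin hw
  simp only [w, Pi.add_apply, Pi.smul_apply, Pi.sub_apply, Pi.single_apply, smul_eq_mul, mul_sub,
    mul_ite, mul_one, mul_zero, add_sub_cancel_left, sum_sub_distrib, sum_ite_eq', mem_univ,
    if_true, sub_nonneg] at this
  nlinarith

theorem eq_max_sub_zero_of_complementary_slackness {x z τ : ℝ} (hz : 0 ≤ z) (hle : x - z ≤ τ)
    (heq : 0 < z → x - z = τ) : z = max (x - τ) 0 := by
  rcases hz.eq_or_lt with rfl | hpos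
  · exact (max_eq_right (by linarith)).symm
  · rw [← heq hpos, sub_sub_cancel, max_eq_left hpos.le]

theorem simplex_projection_threshold_general {n : ℕ} (x : Fin n → ℝ)
    (zstar : Fin n → ℝ)
    (hfeas : (∀ i, 0 ≤ zstar i) ∧ ∑ i, zstar i = 1)
    (hmin : ∀ w : Fin n → ℝ, (∀ i, 0 ≤ w i) → ∑ i, w i = 1 →
      ∑ i, (zstar i - x i) ^ 2 ≤ ∑ i, (w i - x i) ^ 2) :
    ∃ τ : ℝ, (∀ i, zstar i = max (x i - τ) 0) ∧ ∑ i, max (x i - τ) 0 = 1 := by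
  have hmin' : IsMinOn (fun w => ∑ i, (w i - x i) ^ 2) (stdSimplex ℝ (Fin n)) zstar :=
    isMinOn_iff.2 fun w hw => hmin w hw.1 hw.2
  have hgap := fun {i} (hi : 0 < zstar i) => sub_le_sub_of_isMinOn_stdSimplex hfeas hmin' hi
  obtain ⟨i, -, hi⟩ : ∃ i ∈ univ, (0 : ℝ) < zstar i := exists_lt_of_sum_lt (by simp [hfeas.2])
  have hthreshold : ∀ j, zstar j = max (x j - (x i - zstar i)) 0 := fun j =>
    eq_max_sub_zero_of_complementary_slackness (hfeas.1 j) (hgap hi j)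
      fun hj => le_antisymm (hgap hi j) (hgap hj i)
  refine ⟨x i - zstar i, hthreshold, ?_⟩
  simp_rw [← hthreshold]
  exact hfeas.2

theorem simplex_projection_threshold {n : ℕ} (hn : 0 < n) (x : Fin n → ℝ)
    (zstar : Fin n → ℝ)
    (hfeas : (∀ i, 0 ≤ zstar i) ∧ ∑ i, zstar i = 1)
    (hmin : ∀ w : Fin n → ℝ, (∀ i, 0 ≤ w i) → ∑ i, w i = 1 →
      ∑ i, (zstar i - x i) ^ 2 ≤ ∑ i, (w i - x i) ^ 2) :
    ∃ τ : ℝ, (∀ i, zstar i = max (x i - τ) 0) ∧ ∑ i, max (x i - τ) 0 = 1 :=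
  simplex_projection_threshold_general x zstar hfeas hmin
end

section
/- Any continuous piecewise linear function f : ℝ → ℝ with finitely many breakpoints can be written in sum-of-max form: there exist k ∈ ℕ, weights wᵢ ∈ ℝ, slopes aᵢ ∈ ℝ, offsets bᵢ ∈ ℝ, and a constant c such that f(x) = c + Σᵢ₌₁ᵏ wᵢ · max(aᵢ x + bᵢ, 0) for all x ∈ ℝ. -/
/-!
Consecutive affine pieces agree at the breakpoint `tᵢ` they share, so they differ by
`(αᵢ₊₁ - αᵢ) (x - tᵢ)`. Telescoping gives `f x = α₀ x + β₀ + ∑ᵢ (αᵢ₊₁ - αᵢ) max (x - tᵢ) 0`,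
and the affine part is itself a combination of ramps `max (a x + b) 0`, because
`x = max x 0 - max (-x) 0` and `1 = max (0 x + 1) 0`.
-/

open Finset Submodule

def ramp (a b x : ℝ) : ℝ := max (a * x + b) 0

def rampSpan : Submodule ℝ (ℝ → ℝ) := span ℝ (Set.range (Function.uncurry ramp))

lemma ramp_mem_rampSpan (a b : ℝ) : ramp a b ∈ rampSpan := subset_span ⟨(a, b), rfl⟩

lemma affine_mem_rampSpan (α β : ℝ) : (fun x ↦ α * x + β) ∈ rampSpan := by
  have h : (fun x ↦ α * x + β) = α • (ramp 1 0 - ramp (-1) 0) + β • ramp 0 1 := by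
    funext x
    rcases le_total x 0 with hx | hx <;> simp [ramp, hx]
  rw [h]
  exact add_mem (smul_mem _ _ (sub_mem (ramp_mem_rampSpan 1 0) (ramp_mem_rampSpan (-1) 0)))
    (smul_mem _ _ (ramp_mem_rampSpan 0 1))

lemma exists_eq_sum_ramp_of_mem_rampSpan {g : ℝ → ℝ} (hg : g ∈ rampSpan) :
    ∃ (k : ℕ) (w a b : Fin k → ℝ), ∀ x, g x = ∑ i, w i * ramp (a i) (b i) x := by
  obtain ⟨k, w, r, rfl⟩ := mem_span_set'.mp hg
  choose p hp using fun i ↦ (r i).2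
  refine ⟨k, w, fun i ↦ (p i).1, fun i ↦ (p i).2, fun x ↦ ?_⟩
  simp only [Finset.sum_apply, Pi.smul_apply, smul_eq_mul, ← hp]
  rfl

section Pieces

variable {X : Type*} [LinearOrder X] {N : ℕ} {t : Fin N → X}

/-- The `j`-th piece `[t (j - 1), t j]` cut out by the breakpoints `t`, unbounded below for
`j = 0` and above for `j = N`. -/
def piece (t : Fin N → X) (j : Fin (N + 1)) : Set X :=
  {x | ∀ i : Fin N, ((i : ℕ) < j → t i ≤ x) ∧ ((j : ℕ) ≤ i → x ≤ t i)}

lemma mem_piece_castSucc (ht : Monotone t) (i : Fin N) : t i ∈ piece t i.castSucc :=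
  fun _ ↦ ⟨fun h ↦ ht (Fin.le_def.mpr h.le), fun h ↦ ht (Fin.le_def.mpr h)⟩

lemma mem_piece_succ (ht : Monotone t) (i : Fin N) : t i ∈ piece t i.succ :=
  fun _ ↦ ⟨fun h ↦ ht (Fin.le_def.mpr (Nat.lt_succ_iff.mp h)),
    fun h ↦ ht (Fin.le_def.mpr (Nat.le_of_succ_le h))⟩

lemma Monotone.exists_mem_piece (ht : Monotone t) (x : X) : ∃ j, x ∈ piece t j := by
  classical
  -- `j` is the least index from which on all breakpoints lie above `x`.
  let P (n : ℕ) : Prop := ∀ i : Fin N, n ≤ i → x ≤ t i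
  have hPN : P N := fun i hi ↦ absurd i.isLt (by omega)
  have hP : ∃ n, P n := ⟨N, hPN⟩
  refine ⟨⟨Nat.find hP, Nat.lt_succ_of_le (Nat.find_min' hP hPN)⟩,
    fun i ↦ ⟨fun hi ↦ ?_, Nat.find_spec hP i⟩⟩
  obtain ⟨i', hii', hi'⟩ : ∃ i' : Fin N, (i : ℕ) ≤ i' ∧ t i' < x := by
    simpa [P] using Nat.find_min hP hi
  exact (ht (Fin.le_def.mpr hii')).trans hi'.le

end Pieces

theorem eq_affine_add_sum_hinge {N : ℕ} {t : Fin N → ℝ} {α β : Fin (N + 1) → ℝ} {f : ℝ → ℝ}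
    (ht : Monotone t) (hf : ∀ x j, x ∈ piece t j → f x = α j * x + β j) (x : ℝ) :
    f x = α 0 * x + β 0 + ∑ i, (α i.succ - α i.castSucc) * max (x - t i) 0 := by
  have jump (i : Fin N) : (α i.succ * x + β i.succ) - (α i.castSucc * x + β i.castSucc) =
      (α i.succ - α i.castSucc) * (x - t i) := by
    linear_combination (hf _ _ (mem_piece_succ ht i)).symm.trans (hf _ _ (mem_piece_castSucc ht i))
  obtain ⟨j, hj⟩ := ht.exists_mem_piece x
  rw [hf x j hj]
  induction j using Fin.cases with
  | zero =>
    rw [sum_eq_zero fun i _ ↦ by rw [max_eq_right (sub_nonpos.mpr ((hj i).2 i.val.zero_le)),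
      mul_zero], add_zero]
  | succ a =>
    have hsum : ∑ i, (α i.succ - α i.castSucc) * max (x - t i) 0 =
        ∑ i ∈ Iic a, ((α i.succ * x + β i.succ) - (α i.castSucc * x + β i.castSucc)) := by
      refine (sum_subset (subset_univ _) fun i _ hi ↦ ?_).symm.trans
        (sum_congr rfl fun i hi ↦ ?_)
      · have hai : (a.succ : ℕ) ≤ i := Fin.lt_def.mp (not_le.mp (mem_Iic.not.mp hi))
        rw [max_eq_right (sub_nonpos.mpr ((hj i).2 hai)), mul_zero]
      · have hia : (i : ℕ) < a.succ := Nat.lt_succ_of_le (Fin.le_def.mp (mem_Iic.mp hi))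
        rw [max_eq_left (sub_nonneg.mpr ((hj i).1 hia)), jump]
    rw [hsum, Fin.sum_Iic_sub a fun j ↦ α j * x + β j]
    ring

theorem piecewise_linear_sum_of_max_general (f : ℝ → ℝ)
    (hpl : ∃ (N : ℕ) (t : Fin N → ℝ) (α β : Fin (N + 1) → ℝ), StrictMono t ∧
      ∀ (x : ℝ) (j : Fin (N + 1)),
        (∀ i : Fin N, ((i : ℕ) < (j : ℕ) → t i ≤ x) ∧ ((j : ℕ) ≤ (i : ℕ) → x ≤ t i)) →
        f x = α j * x + β j) :
    ∃ (k : ℕ) (w a b : Fin k → ℝ) (c : ℝ),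
      ∀ x : ℝ, f x = c + ∑ i, w i * max (a i * x + b i) 0 := by
  obtain ⟨N, t, α, β, ht, hf⟩ := hpl
  have hrepr :
      f = (fun x ↦ α 0 * x + β 0) + ∑ i, (α i.succ - α i.castSucc) • ramp 1 (-t i) := by
    funext x
    simp [eq_affine_add_sum_hinge ht.monotone hf x, ramp, sub_eq_add_neg]
  have hmem : f ∈ rampSpan := by
    rw [hrepr]
    exact add_mem (affine_mem_rampSpan _ _)
      (sum_mem fun i _ ↦ smul_mem _ _ (ramp_mem_rampSpan 1 (-t i)))
  obtain ⟨k, w, a, b, hk⟩ := exists_eq_sum_ramp_of_mem_rampSpan hmem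
  exact ⟨k, w, a, b, 0, fun x ↦ (hk x).trans (zero_add _).symm⟩

theorem piecewise_linear_sum_of_max (f : ℝ → ℝ) (hf : Continuous f)
    (hpl : ∃ (N : ℕ) (t : Fin N → ℝ) (α β : Fin (N + 1) → ℝ), StrictMono t ∧
      ∀ (x : ℝ) (j : Fin (N + 1)),
        (∀ i : Fin N, ((i : ℕ) < (j : ℕ) → t i ≤ x) ∧ ((j : ℕ) ≤ (i : ℕ) → x ≤ t i)) →
        f x = α j * x + β j) :
    ∃ (k : ℕ) (w a b : Fin k → ℝ) (c : ℝ),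
      ∀ x : ℝ, f x = c + ∑ i, w i * max (a i * x + b i) 0 :=
  piecewise_linear_sum_of_max_general f hpl
end

section
/- The function f : ℝ² → ℝ, f(x) = max(a₁ᵀx, a₂ᵀx, a₃ᵀx), for a₁, a₂, a₃ ∈ ℝ² pairwise linearly independent, cannot be written exactly as f(x) = Σᵢ₌₁ᵐ wᵢ max(aᵢᵀx + bᵢ, 0) + cᵀx + d for any finite m (i.e., as a two-layer ReLU network plus affine part), because f is positively homogeneous with nondifferentiability set equal to three half-lines from the origin, while any such ReLU expression has nondifferentiability set that is a union of full lines. -/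
/-! Along a ray `T • z`, `T → ∞`, a ReLU ridge `max (φ x + b) 0` is eventually affine near both
`T • z` and `T • -z` unless `φ z = 0`, in which case it takes the same values near both points.
Hence the symmetric second difference of a ReLU network in any direction `v` eventually agrees at
`T • z` and `T • -z`. For three affinely independent linear forms choose `z` with
`ℓ₁ z = ℓ₂ z > ℓ₃ z` (a point of a crease) and `v` with `ℓ₁ v > ℓ₂ v`: the second difference of
the max at `T • z` is at least `ℓ₁ v - ℓ₂ v > 0`, while near `T • -z` the max is the linear form
`ℓ₃`, whose second difference vanishes. -/

open Matrix
open Filter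

theorem exists_eq_smul_of_ker_le_ker {K V : Type*} [Field K] [AddCommGroup V] [Module K V]
    {p q : Module.Dual K V} (h : LinearMap.ker p ≤ LinearMap.ker q) : ∃ c : K, q = c • p := by
  obtain ⟨c, hc⟩ := (Submodule.mem_span_range_iff_exists_fun K).1
    (mem_span_of_iInf_ker_le_ker (L := fun _ : Unit => p) (by simpa using h))
  exact ⟨c (), by simpa using hc.symm⟩

section

variable {E : Type*} [AddCommGroup E] [Module ℝ E] {ℓ₁ ℓ₂ ℓ₃ : Module.Dual ℝ E}

def secondDiff (f : E → ℝ) (v x : E) : ℝ := f (x + v) + f (x - v) - 2 * f x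

def reluNet {ι : Type*} [Fintype ι] (w : ι → ℝ) (φ : ι → Module.Dual ℝ E) (b : ι → ℝ)
    (ψ : Module.Dual ℝ E) (d : ℝ) (x : E) : ℝ :=
  ∑ i, w i * max (φ i x + b i) 0 + ψ x + d

theorem eventually_le_apply_smul_add {φ : Module.Dual ℝ E} {z : E} (hφ : 0 < φ z) (c : ℝ)
    (v : E) : ∀ᶠ T : ℝ in atTop, c ≤ φ (T • z + v) ∧ c ≤ φ (T • z - v) ∧ c ≤ φ (T • z) := by
  filter_upwards [(tendsto_id.atTop_mul_const hφ).eventually_ge_atTop (c + |φ v|)] with T hT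
  simp only [id, map_add, map_sub, map_smul, smul_eq_mul] at hT ⊢
  refine ⟨?_, ?_, ?_⟩ <;> linarith [abs_nonneg (φ v), le_abs_self (φ v), neg_abs_le (φ v)]

theorem eventually_secondDiff_relu_eq_zero {φ : Module.Dual ℝ E} {z : E} (hφ : φ z ≠ 0)
    (b : ℝ) (v : E) :
    ∀ᶠ T : ℝ in atTop, secondDiff (fun x => max (φ x + b) 0) v (T • z) = 0 := by
  rcases hφ.lt_or_gt with hneg | hpos
  · have hpos : 0 < (-φ) z := by simpa using hneg
    filter_upwards [eventually_le_apply_smul_add hpos b v] with T ⟨h₁, h₂, h₃⟩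
    simp only [LinearMap.neg_apply] at h₁ h₂ h₃
    simp only [secondDiff]
    rw [max_eq_right (by linarith), max_eq_right (by linarith), max_eq_right (by linarith)]
    ring
  · filter_upwards [eventually_le_apply_smul_add hpos (-b) v] with T ⟨h₁, h₂, h₃⟩
    simp only [secondDiff]
    rw [max_eq_left (by linarith), max_eq_left (by linarith), max_eq_left (by linarith),
      map_add, map_sub]
    ring

theorem eventually_secondDiff_relu_smul_neg (φ : Module.Dual ℝ E) (b : ℝ) (z v : E) :
    ∀ᶠ T : ℝ in atTop, secondDiff (fun x => max (φ x + b) 0) v (T • z) =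
      secondDiff (fun x => max (φ x + b) 0) v (T • -z) := by
  by_cases hφ : φ z = 0
  · exact .of_forall fun T => by simp [secondDiff, hφ]
  · filter_upwards [eventually_secondDiff_relu_eq_zero hφ b v,
      eventually_secondDiff_relu_eq_zero (z := -z) (by simpa using hφ) b v] with T h₁ h₂
    rw [h₁, h₂]

theorem secondDiff_reluNet {ι : Type*} [Fintype ι] (w : ι → ℝ) (φ : ι → Module.Dual ℝ E)
    (b : ι → ℝ) (ψ : Module.Dual ℝ E) (d : ℝ) (v x : E) :
    secondDiff (reluNet w φ b ψ d) v x =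
      ∑ i, w i * secondDiff (fun y => max (φ i y + b i) 0) v x := by
  simp only [secondDiff, reluNet, map_add, map_sub, mul_sub, mul_add, Finset.mul_sum,
    Finset.sum_add_distrib, Finset.sum_sub_distrib, mul_left_comm (2 : ℝ)]
  ring

theorem eventually_secondDiff_reluNet_smul_neg {ι : Type*} [Fintype ι] (w : ι → ℝ)
    (φ : ι → Module.Dual ℝ E) (b : ι → ℝ) (ψ : Module.Dual ℝ E) (d : ℝ) (z v : E) :
    ∀ᶠ T : ℝ in atTop, secondDiff (reluNet w φ b ψ d) v (T • z) =
      secondDiff (reluNet w φ b ψ d) v (T • -z) := by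
  filter_upwards [eventually_all.2 fun i => eventually_secondDiff_relu_smul_neg (φ i) (b i) z v]
    with T hT
  simp only [secondDiff_reluNet, hT]

theorem le_secondDiff_max {x : E} (h₁₂ : ℓ₁ x = ℓ₂ x) (h₃ : ℓ₃ x ≤ ℓ₁ x) (v : E) :
    ℓ₁ v - ℓ₂ v ≤ secondDiff (fun y => max (ℓ₁ y) (max (ℓ₂ y) (ℓ₃ y))) v x := by
  have hx : max (ℓ₁ x) (max (ℓ₂ x) (ℓ₃ x)) = ℓ₁ x := max_eq_left (max_le h₁₂.ge h₃)
  have hplus : ℓ₁ (x + v) ≤ max (ℓ₁ (x + v)) (max (ℓ₂ (x + v)) (ℓ₃ (x + v))) := le_max_left _ _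
  have hminus : ℓ₂ (x - v) ≤ max (ℓ₁ (x - v)) (max (ℓ₂ (x - v)) (ℓ₃ (x - v))) :=
    (le_max_left _ _).trans (le_max_right _ _)
  simp only [secondDiff, hx]
  linarith [map_add ℓ₁ x v, map_sub ℓ₂ x v]

theorem eventually_secondDiff_max_eq_zero {z : E} (h₁ : ℓ₁ z < ℓ₃ z) (h₂ : ℓ₂ z < ℓ₃ z)
    (v : E) :
    ∀ᶠ T : ℝ in atTop, secondDiff (fun y => max (ℓ₁ y) (max (ℓ₂ y) (ℓ₃ y))) v (T • z) = 0 := by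
  have hmax : ∀ y, ℓ₁ y ≤ ℓ₃ y → ℓ₂ y ≤ ℓ₃ y → max (ℓ₁ y) (max (ℓ₂ y) (ℓ₃ y)) = ℓ₃ y :=
    fun y h₁ h₂ => by rw [max_eq_right h₂, max_eq_right h₁]
  filter_upwards [eventually_le_apply_smul_add (φ := ℓ₃ - ℓ₁) (sub_pos.2 h₁) 0 v,
    eventually_le_apply_smul_add (φ := ℓ₃ - ℓ₂) (sub_pos.2 h₂) 0 v]
    with T ⟨ha₁, hb₁, hc₁⟩ ⟨ha₂, hb₂, hc₂⟩
  simp only [LinearMap.sub_apply, sub_nonneg] at ha₁ hb₁ hc₁ ha₂ hb₂ hc₂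
  simp only [secondDiff]
  rw [hmax _ ha₁ ha₂, hmax _ hb₁ hb₂, hmax _ hc₁ hc₂, map_add, map_sub]
  ring

theorem max_ne_reluNet_of_apply_eq_of_apply_lt {z v : E} (hz₁₂ : ℓ₁ z = ℓ₂ z)
    (hz₃ : ℓ₃ z < ℓ₁ z) (hv : ℓ₂ v < ℓ₁ v) {ι : Type*} [Fintype ι] (w : ι → ℝ)
    (φ : ι → Module.Dual ℝ E) (b : ι → ℝ) (ψ : Module.Dual ℝ E) (d : ℝ) :
    (fun x => max (ℓ₁ x) (max (ℓ₂ x) (ℓ₃ x))) ≠ reluNet w φ b ψ d := by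
  intro hF
  obtain ⟨T, hT, hsymm, hzero⟩ := ((eventually_ge_atTop 0).and
    ((eventually_secondDiff_reluNet_smul_neg w φ b ψ d z v).and
    (eventually_secondDiff_max_eq_zero (z := -z) (by simpa using hz₃)
      (by simpa [hz₁₂] using hz₃) v))).exists
  have hpos : ℓ₁ v - ℓ₂ v ≤ secondDiff (fun x => max (ℓ₁ x) (max (ℓ₂ x) (ℓ₃ x))) v (T • z) :=
    le_secondDiff_max (by simp only [map_smul, hz₁₂])
      (by simpa using mul_le_mul_of_nonneg_left hz₃.le hT) v
  rw [hF] at hpos hzero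
  linarith

theorem exists_apply_lt_apply_of_ne (h : ℓ₁ ≠ ℓ₂) : ∃ v, ℓ₂ v < ℓ₁ v := by
  obtain ⟨v, hv⟩ := DFunLike.ne_iff.1 h
  rcases hv.lt_or_gt with hlt | hgt
  · exact ⟨-v, by simpa using hlt⟩
  · exact ⟨v, hgt⟩

theorem exists_apply_eq_apply_lt_apply_of_affineIndependent
    (h : AffineIndependent ℝ ![ℓ₁, ℓ₂, ℓ₃]) : ∃ z, ℓ₁ z = ℓ₂ z ∧ ℓ₃ z < ℓ₁ z := by
  by_contra! hle
  have hker : LinearMap.ker (ℓ₂ - ℓ₁) ≤ LinearMap.ker (ℓ₃ - ℓ₁) := fun z hz => by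
    simp only [LinearMap.mem_ker, LinearMap.sub_apply, sub_eq_zero] at hz ⊢
    have hneg := hle (-z) (by simp [hz])
    simp only [map_neg, neg_le_neg_iff] at hneg
    exact le_antisymm hneg (hle z hz.symm)
  obtain ⟨c, hc⟩ := exists_eq_smul_of_ker_le_ker hker
  have hline : ℓ₃ ∈ line[ℝ, ℓ₁, ℓ₂] := by
    convert AffineMap.lineMap_mem_affineSpan_pair c ℓ₁ ℓ₂
    rw [AffineMap.lineMap_apply, vsub_eq_sub, vadd_eq_add, ← hc, sub_add_cancel]
  exact affineIndependent_iff_not_collinear_set.1 h.comm_right.comm_left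
    (collinear_insert_of_mem_affineSpan_pair hline)

theorem max_ne_reluNet_of_affineIndependent (h : AffineIndependent ℝ ![ℓ₁, ℓ₂, ℓ₃])
    {ι : Type*} [Fintype ι] (w : ι → ℝ) (φ : ι → Module.Dual ℝ E) (b : ι → ℝ)
    (ψ : Module.Dual ℝ E) (d : ℝ) :
    (fun x => max (ℓ₁ x) (max (ℓ₂ x) (ℓ₃ x))) ≠ reluNet w φ b ψ d := by
  obtain ⟨z, hz₁₂, hz₃⟩ := exists_apply_eq_apply_lt_apply_of_affineIndependent h
  obtain ⟨v, hv⟩ := exists_apply_lt_apply_of_ne (h.injective.ne (by decide : (0 : Fin 3) ≠ 1))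
  exact max_ne_reluNet_of_apply_eq_of_apply_lt hz₁₂ hz₃ hv w φ b ψ d

end

theorem max_of_three_not_two_layer_relu_general
    (a₁ a₂ a₃ : Fin 2 → ℝ)
    (haff : AffineIndependent ℝ ![a₁, a₂, a₃]) :
    ¬ ∃ (m : ℕ) (w : Fin m → ℝ) (u : Fin m → (Fin 2 → ℝ)) (bb : Fin m → ℝ)
        (c : Fin 2 → ℝ) (d : ℝ),
      ∀ x : Fin 2 → ℝ,
        max (a₁ ⬝ᵥ x) (max (a₂ ⬝ᵥ x) (a₃ ⬝ᵥ x)) =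
          (∑ i, w i * max (u i ⬝ᵥ x + bb i) 0) + c ⬝ᵥ x + d := by
  rintro ⟨m, w, u, bb, c, d, h⟩
  let L := dotProductEquiv ℝ (Fin 2)
  have hL : AffineIndependent ℝ ![L a₁, L a₂, L a₃] := by
    convert haff.map' L.toLinearMap.toAffineMap L.injective using 1
    ext i : 1
    fin_cases i <;> rfl
  exact max_ne_reluNet_of_affineIndependent hL w (L ∘ u) bb (L c) d (funext h)

theorem max_of_three_not_two_layer_relu
    (a₁ a₂ a₃ : Fin 2 → ℝ)
    (hpair₁₂ : LinearIndependent ℝ ![a₁, a₂])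
    (hpair₁₃ : LinearIndependent ℝ ![a₁, a₃])
    (hpair₂₃ : LinearIndependent ℝ ![a₂, a₃])
    (haff : AffineIndependent ℝ ![a₁, a₂, a₃]) :
    ¬ ∃ (m : ℕ) (w : Fin m → ℝ) (u : Fin m → (Fin 2 → ℝ)) (bb : Fin m → ℝ)
        (c : Fin 2 → ℝ) (d : ℝ),
      ∀ x : Fin 2 → ℝ,
        max (a₁ ⬝ᵥ x) (max (a₂ ⬝ᵥ x) (a₃ ⬝ᵥ x)) =
          (∑ i, w i * max (u i ⬝ᵥ x + bb i) 0) + c ⬝ᵥ x + d :=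
  max_of_three_not_two_layer_relu_general a₁ a₂ a₃ haff
end
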